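/- Assume dim_k V = 4n with n ≥ 1. Then for every nonzero alternating 4n-linear form vol on V there exists a constant c ∈ k such that for every x ∈ H the 2n-th wedge power of ω_x satisfies ω_x^{∧2n} = c · Q(x)^n · vol. -/

import Mathlib

/-!
Write `ω_x^{∧2n} = f(x) · vol`. The Pfaffian identity `Pf² = det`, applied to
`ω_x = τ(x · -, -)`, gives `f(x)² = K · det(x ·)` for a constant `K`. Since `x² = Q(x)`,
`det(x ·)² = Q(x)^{4n}`; and pulling `ω_x` back along `x ·` multiplies it by `-Q(x)`, so
`det(x ·) · f(x) = Q(x)^{2n} · f(x)`. Together, `f(x)² = K · (Q(x)^n)²` for every `x`.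
Both `f` and `Q^n` restrict to polynomials on every line of `H`, and on a line through a point
where `f ≠ 0` the identity `P² = (c R)²` in the domain `k[X]` forces `P = c R`; hence
`f = c · Q^n`.
-/

open CliffordAlgebra

/-- The `m`-th wedge power of a bilinear form `ω` on `V`, as a `2m`-linear expression:
`(ξ₁, …, ξ_{2m}) ↦ Σ_{σ ∈ S_{2m}} sgn σ · Π_{i=1}^{m} ω(ξ_{σ(2i−1)}, ξ_{σ(2i)})`. -/
def wedgePow {k V : Type*} [Field k] [AddCommGroup V] [Module k V]
    (ω : V → V → k) (m : ℕ) (ξ : Fin (2 * m) → V) : k :=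
  ∑ σ : Equiv.Perm (Fin (2 * m)), ((Equiv.Perm.sign σ : ℤ) : k) *
    ∏ i : Fin m,
      ω (ξ (σ ⟨2 * (i : ℕ), by have := i.isLt; omega⟩))
        (ξ (σ ⟨2 * (i : ℕ) + 1, by have := i.isLt; omega⟩))

open Module Matrix Polynomial
open LinearMap (BilinForm)

theorem AlternatingMap.compLinearMap_eq_det_smul {k V ι : Type*} [Field k] [AddCommGroup V]
    [Module k V] [Fintype ι] [DecidableEq ι] (b : Basis ι k V) (g : V [⋀^ι]→ₗ[k] k)
    (φ : V →ₗ[k] V) : g.compLinearMap φ = LinearMap.det φ • g := by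
  rw [g.eq_smul_basis_det b]
  ext v
  simp only [compLinearMap_apply, smul_apply, smul_eq_mul]
  rw [show (fun i => φ (v i)) = φ ∘ v from rfl, Basis.det_comp]
  ring

theorem AlternatingMap.apply_eq_div_mul {k V ι : Type*} [Field k] [AddCommGroup V] [Module k V]
    [Fintype ι] [DecidableEq ι] (b : Basis ι k V) (g vol : V [⋀^ι]→ₗ[k] k) (hvol : vol ≠ 0)
    (ξ : ι → V) : g ξ = g b / vol b * vol ξ := by
  have hb : vol b ≠ 0 := (vol.map_basis_ne_zero_iff b).mpr hvol
  rw [g.eq_smul_basis_det b, vol.eq_smul_basis_det b]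
  simp only [smul_apply, smul_eq_mul, Basis.det_self]
  field_simp

namespace Matrix

variable (k : Type*) [CommRing k]

def hyperbolicIndex (m : ℕ) : Fin 2 ⊕ Fin (2 * m) ≃ Fin (2 * (m + 1)) :=
  finSumFinEquiv.trans (finCongr (by ring))

def stdSymplectic : (m : ℕ) → Matrix (Fin (2 * m)) (Fin (2 * m)) k
  | 0 => 0
  | m + 1 => reindex (hyperbolicIndex m) (hyperbolicIndex m)
      (fromBlocks !![0, 1; -1, 0] 0 0 (stdSymplectic m))

theorem det_stdSymplectic (m : ℕ) : (stdSymplectic k m).det = 1 := by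
  induction m with
  | zero => exact det_fin_zero
  | succ m ih => simp [stdSymplectic, ih]

end Matrix

namespace LinearMap.BilinForm

variable {k V : Type*} [Field k] [AddCommGroup V] [Module k V]

theorem toMatrix_reindex {ι ι' : Type*} [Fintype ι] [DecidableEq ι] [Fintype ι'] [DecidableEq ι']
    (ω : BilinForm k V) (b : Basis ι k V) (e : ι ≃ ι') :
    toMatrix (b.reindex e) ω = reindex e e (toMatrix b ω) := by
  ext i j
  simp [toMatrix_apply]

theorem toMatrix_prodEquivOfIsCompl {ι₁ ι₂ : Type*} [Fintype ι₁] [DecidableEq ι₁] [Fintype ι₂]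
    [DecidableEq ι₂] (ω : BilinForm k V) {W W' : Submodule k V} (h : IsCompl W W')
    (hWW' : ∀ w ∈ W, ∀ w' ∈ W', ω w w' = 0) (hW'W : ∀ w' ∈ W', ∀ w ∈ W, ω w' w = 0)
    (b₁ : Basis ι₁ k W) (b₂ : Basis ι₂ k W') :
    toMatrix ((b₁.prod b₂).map (Submodule.prodEquivOfIsCompl W W' h)) ω =
      fromBlocks (toMatrix b₁ (ω.restrict W)) 0 0 (toMatrix b₂ (ω.restrict W')) := by
  ext (i | i) (j | j) <;>
    simp [toMatrix_apply, Submodule.coe_prodEquivOfIsCompl', hWW', hW'W]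

theorem exists_apply_eq_one [Nontrivial V] {ω : BilinForm k V} (hω : ω.Nondegenerate) :
    ∃ u v, ω u v = 1 := by
  obtain ⟨u, hu⟩ := exists_ne (0 : V)
  obtain ⟨v, hv⟩ : ∃ v, ω u v ≠ 0 := by
    by_contra! h
    exact hu (hω.1 u h)
  exact ⟨u, (ω u v)⁻¹ • v, by simp [hv]⟩

theorem linearIndependent_of_apply_eq_one {ω : BilinForm k V} (hω : ω.IsAlt) {u v : V}
    (huv : ω u v = 1) : LinearIndependent k ![u, v] := by
  rw [LinearIndependent.pair_iff]
  intro s t hst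
  have h₁ := congrArg (ω u) hst
  have h₂ := congrArg (ω v) hst
  simp only [map_add, map_smul, smul_eq_mul, huv, hω.self_eq_zero, map_zero] at h₁ h₂
  rw [← hω.neg_eq, huv] at h₂
  exact ⟨by linear_combination -h₂, by linear_combination h₁⟩

theorem toMatrix_span_pair_restrict {ω : BilinForm k V} (hω : ω.IsAlt) {u v : V}
    (huv : ω u v = 1) :
    toMatrix (Basis.span (linearIndependent_of_apply_eq_one hω huv))
      (ω.restrict (Submodule.span k (Set.range ![u, v]))) = !![0, 1; -1, 0] := by
  ext i j
  fin_cases i <;> fin_cases j <;>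
    simp [toMatrix_apply, Basis.span_apply, huv, hω.self_eq_zero, ← hω.neg_eq u v]

/-- Darboux: split off the hyperbolic plane spanned by `u, v` with `ω u v = 1` and recurse on its
orthogonal complement. -/
theorem exists_basis_toMatrix_eq_stdSymplectic [FiniteDimensional k V] {ω : BilinForm k V}
    (hω : ω.IsAlt) (hnd : ω.Nondegenerate) {m : ℕ} (hm : finrank k V = 2 * m) :
    ∃ c : Basis (Fin (2 * m)) k V, toMatrix c ω = stdSymplectic k m := by
  induction m generalizing V ω with
  | zero =>
    refine ⟨finBasisOfFinrankEq k V hm, ?_⟩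
    ext i
    exact i.elim0
  | succ m ih =>
    have : Nontrivial V := Module.nontrivial_of_finrank_pos (R := k) (by omega)
    obtain ⟨u, v, huv⟩ := exists_apply_eq_one hnd
    set W := Submodule.span k (Set.range ![u, v])
    have hli := linearIndependent_of_apply_eq_one hω huv
    have hWnd : (ω.restrict W).Nondegenerate := by
      rw [nondegenerate_iff_det_ne_zero (Basis.span hli), toMatrix_span_pair_restrict hω huv]
      simp
    have hcompl := isCompl_orthogonal_of_restrict_nondegenerate hω.isRefl hWnd
    have hW'nd : (ω.restrict (ω.orthogonal W)).Nondegenerate := by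
      rw [restrict_nondegenerate_iff_isCompl_orthogonal hω.isRefl,
        orthogonal_orthogonal hnd hω.isRefl]
      exact hcompl.symm
    have hrank : finrank k (ω.orthogonal W) = 2 * m := by
      rw [finrank_orthogonal hnd, finrank_span_eq_card hli, hm, Fintype.card_fin]
      omega
    obtain ⟨c, hc⟩ := ih (ω := ω.restrict (ω.orthogonal W)) (fun x => hω x) hW'nd hrank
    refine ⟨(((Basis.span hli).prod c).map
      (Submodule.prodEquivOfIsCompl _ _ hcompl)).reindex (hyperbolicIndex m), ?_⟩
    rw [toMatrix_reindex, toMatrix_prodEquivOfIsCompl, toMatrix_span_pair_restrict hω huv, hc]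
    · rfl
    · exact fun w hw w' hw' => hw' w hw
    · exact fun w' hw' w hw => hω.isRefl _ _ (hw' w hw)

def toMultilinearMap (ω : BilinForm k V) : MultilinearMap k (fun _ : Fin 2 => V) k where
  toFun x := ω (x 0) (x 1)
  map_update_add' x i a b := by fin_cases i <;> simp
  map_update_smul' x i c a := by fin_cases i <;> simp

theorem toMultilinearMap_apply (ω : BilinForm k V) (x : Fin 2 → V) :
    ω.toMultilinearMap x = ω (x 0) (x 1) :=
  rfl

def pairIndex (m : ℕ) : (Σ _ : Fin m, Fin 2) ≃ Fin (2 * m) :=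
  (Equiv.sigmaEquivProd _ _).trans (finProdFinEquiv.trans (finCongr (mul_comm m 2)))

theorem pairIndex_val (m : ℕ) (i : Fin m) (j : Fin 2) : (pairIndex m ⟨i, j⟩ : ℕ) = 2 * i + j := by
  simp [pairIndex]
  ring

def pairProd (ω : BilinForm k V) (m : ℕ) : MultilinearMap k (fun _ : Fin (2 * m) => V) k :=
  ((MultilinearMap.mkPiAlgebra k (Fin m) k).compMultilinearMap
    fun _ => ω.toMultilinearMap).domDomCongr (pairIndex m)

noncomputable def wedgePowAlt (ω : BilinForm k V) (m : ℕ) : V [⋀^Fin (2 * m)]→ₗ[k] k :=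
  MultilinearMap.alternatization (pairProd ω m)

theorem wedgePowAlt_apply (ω : BilinForm k V) (m : ℕ) (ξ : Fin (2 * m) → V) :
    ω.wedgePowAlt m ξ = wedgePow (fun u v => ω u v) m ξ := by
  simp only [wedgePowAlt, MultilinearMap.alternatization_apply, wedgePow, Units.smul_def,
    zsmul_eq_mul]
  refine Finset.sum_congr rfl fun σ _ => ?_
  congr 1
  simp only [pairProd, toMultilinearMap_apply, MultilinearMap.domDomCongr_apply,
    MultilinearMap.compMultilinearMap_apply, MultilinearMap.mkPiAlgebra_apply]
  refine Finset.prod_congr rfl fun i _ => ?_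
  have h₀ : pairIndex m ⟨i, 0⟩ = ⟨2 * i, by omega⟩ := Fin.ext (pairIndex_val m i 0)
  have h₁ : pairIndex m ⟨i, 1⟩ = ⟨2 * i + 1, by omega⟩ := Fin.ext (pairIndex_val m i 1)
  simp only [Sigma.curry, h₀, h₁]

theorem wedgePowAlt_comp (ω : BilinForm k V) (m : ℕ) (φ : V →ₗ[k] V) :
    (ω.comp φ φ).wedgePowAlt m = (ω.wedgePowAlt m).compLinearMap φ := by
  ext ξ
  simp only [AlternatingMap.compLinearMap_apply, wedgePowAlt_apply]
  rfl

theorem wedgePowAlt_smul (ω : BilinForm k V) (m : ℕ) (r : k) :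
    (r • ω).wedgePowAlt m = r ^ m • ω.wedgePowAlt m := by
  ext ξ
  simp only [AlternatingMap.smul_apply, wedgePowAlt_apply, wedgePow, smul_apply, smul_eq_mul,
    Finset.prod_mul_distrib, Finset.prod_const, Finset.card_univ, Fintype.card_fin,
    Finset.mul_sum]
  exact Finset.sum_congr rfl fun σ _ => by ring

theorem wedgePowAlt_apply_basis (ω : BilinForm k V) {m : ℕ} (b : Basis (Fin (2 * m)) k V) :
    ω.wedgePowAlt m b = (toMatrix b ω).toBilin'.wedgePowAlt m (Pi.basisFun k _) := by
  simp only [wedgePowAlt_apply, wedgePow, Pi.basisFun_apply, Matrix.toBilin'_single,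
    toMatrix_apply]

/-- The shear `id - f ⊗ z` with `f z = 1` preserves `ω` but has determinant zero. -/
theorem wedgePowAlt_eq_zero_of_mem_radical (ω : BilinForm k V) {m : ℕ}
    (b : Basis (Fin (2 * m)) k V) {z : V} (hz : z ≠ 0) (hl : ∀ w, ω z w = 0)
    (hr : ∀ w, ω w z = 0) : ω.wedgePowAlt m = 0 := by
  have : FiniteDimensional k V := b.finiteDimensional_of_finite
  obtain ⟨f, hf⟩ := Module.Projective.exists_dual_eq_one k hz
  set φ : V →ₗ[k] V := LinearMap.id - f.smulRight z
  have hφ : ω.comp φ φ = ω := by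
    ext u v
    simp [φ, hl, hr]
  have hdet : LinearMap.det φ = 0 := by
    rw [LinearMap.det_eq_zero_iff_ker_ne_bot, Submodule.ne_bot_iff]
    exact ⟨z, by simp [φ, hf], hz⟩
  have := AlternatingMap.compLinearMap_eq_det_smul b (ω.wedgePowAlt m) φ
  rwa [← wedgePowAlt_comp, hφ, hdet, zero_smul] at this

variable (k) in
noncomputable def stdSymplecticWedge (m : ℕ) : k :=
  (stdSymplectic k m).toBilin'.wedgePowAlt m (Pi.basisFun k _)

/-- The Pfaffian identity `Pf² = det`, with `ω^{∧m}` in place of the Pfaffian. -/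
theorem sq_wedgePowAlt_apply_basis {ω : BilinForm k V} (hω : ω.IsAlt) {m : ℕ}
    (b : Basis (Fin (2 * m)) k V) :
    ω.wedgePowAlt m b ^ 2 = stdSymplecticWedge k m ^ 2 * (toMatrix b ω).det := by
  have : FiniteDimensional k V := b.finiteDimensional_of_finite
  by_cases hnd : ω.Nondegenerate
  · obtain ⟨c, hc⟩ := exists_basis_toMatrix_eq_stdSymplectic hω hnd
      ((finrank_eq_card_basis b).trans (Fintype.card_fin _))
    have hb : ω.wedgePowAlt m b = c.det b * stdSymplecticWedge k m := by
      rw [(ω.wedgePowAlt m).eq_smul_basis_det c, AlternatingMap.smul_apply, smul_eq_mul,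
        wedgePowAlt_apply_basis, hc, stdSymplecticWedge, mul_comm]
    rw [hb, ← toMatrix_mul_basis_toMatrix c, hc, det_mul, det_mul, det_transpose,
      det_stdSymplectic, c.det_apply]
    ring
  · obtain ⟨z, hl, hz⟩ : ∃ z, (∀ w, ω z w = 0) ∧ z ≠ 0 := by
      have h := mt hω.isRefl.nondegenerate_iff_separatingLeft.mpr hnd
      simp only [LinearMap.SeparatingLeft, not_forall, exists_prop] at h
      exact h
    rw [(nondegenerate_iff_det_ne_zero b).not_left.mp hnd,
      wedgePowAlt_eq_zero_of_mem_radical ω b hz hl fun w => hω.isRefl _ _ (hl w)]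
    simp

theorem sq_wedgePowAlt_compLeft_apply_basis (τ : BilinForm k V) {φ : V →ₗ[k] V} {r : k} {m : ℕ}
    (b : Basis (Fin (2 * m)) k V) (hω : (τ.compLeft φ).IsAlt)
    (hpull : (τ.compLeft φ).comp φ φ = r • τ.compLeft φ)
    (hdet : LinearMap.det φ ^ 2 = r ^ (2 * m)) :
    (τ.compLeft φ).wedgePowAlt m b ^ 2 =
      stdSymplecticWedge k m ^ 2 * (toMatrix b τ).det * r ^ m := by
  set F := (τ.compLeft φ).wedgePowAlt m b
  set K := stdSymplecticWedge k m ^ 2 * (toMatrix b τ).det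
  have hsq : F ^ 2 = K * LinearMap.det φ := by
    rw [sq_wedgePowAlt_apply_basis hω, toMatrix_compLeft, det_mul, det_transpose,
      LinearMap.det_toMatrix]
    ring
  have hmul : LinearMap.det φ * F = r ^ m * F := by
    have h := congrArg (fun g => g b)
      (AlternatingMap.compLinearMap_eq_det_smul b ((τ.compLeft φ).wedgePowAlt m) φ)
    simp only [← wedgePowAlt_comp, hpull, wedgePowAlt_smul, AlternatingMap.smul_apply,
      smul_eq_mul] at h
    exact h.symm
  by_cases hF : F = 0
  · have h0 : K * LinearMap.det φ = 0 := by rw [← hsq, hF, zero_pow two_ne_zero]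
    have : (K * r ^ m) ^ 2 = 0 := by
      calc (K * r ^ m) ^ 2 = K ^ 2 * r ^ (2 * m) := by ring
        _ = (K * LinearMap.det φ) ^ 2 := by rw [← hdet]; ring
        _ = 0 := by rw [h0, zero_pow two_ne_zero]
    rw [hF, pow_eq_zero_iff two_ne_zero |>.mp this, zero_pow two_ne_zero]
  · rw [hsq, mul_right_cancel₀ hF hmul]

end LinearMap.BilinForm

section PolynomialAlongLines

variable (k H : Type*) [Field k] [AddCommGroup H] [Module k H]

def polynomialAlongLines : Subalgebra k (H → k) where
  carrier := {f | ∀ x y : H, ∃ P : k[X], ∀ t : k, P.eval t = f (x + t • y)}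
  mul_mem' {f g} hf hg x y := by
    obtain ⟨P, hP⟩ := hf x y
    obtain ⟨R, hR⟩ := hg x y
    exact ⟨P * R, fun t => by simp [hP, hR]⟩
  add_mem' {f g} hf hg x y := by
    obtain ⟨P, hP⟩ := hf x y
    obtain ⟨R, hR⟩ := hg x y
    exact ⟨P + R, fun t => by simp [hP, hR]⟩
  algebraMap_mem' r x y := ⟨C r, fun t => by simp⟩

variable {k H}

theorem LinearMap.mem_polynomialAlongLines (ℓ : H →ₗ[k] k) : ⇑ℓ ∈ polynomialAlongLines k H :=
  fun x y => ⟨C (ℓ x) + C (ℓ y) * X, fun t => by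
    simp only [eval_add, eval_mul, eval_C, eval_X, map_add, map_smul, smul_eq_mul, mul_comm]⟩

theorem QuadraticMap.mem_polynomialAlongLines (Q : QuadraticForm k H) :
    ⇑Q ∈ polynomialAlongLines k H := fun x y =>
  ⟨C (Q x) + C (polar Q x y) * X + C (Q y) * X ^ 2, fun t => by
    simp only [eval_add, eval_mul, eval_C, eval_X, eval_pow]
    rw [QuadraticMap.map_add Q, QuadraticMap.map_smul, polar_smul_right, smul_eq_mul, smul_eq_mul]
    ring⟩

theorem LinearMap.BilinForm.wedgePowAlt_mem_polynomialAlongLines {V : Type*} [AddCommGroup V]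
    [Module k V] (L : H →ₗ[k] BilinForm k V) (m : ℕ) (ξ : Fin (2 * m) → V) :
    (fun x => (L x).wedgePowAlt m ξ) ∈ polynomialAlongLines k H := by
  simp only [wedgePowAlt_apply, wedgePow, ← Finset.sum_fn]
  refine Subalgebra.sum_mem _ fun σ _ => Subalgebra.smul_mem _ ?_ ((Equiv.Perm.sign σ : ℤ) : k)
  simp only [← Finset.prod_fn]
  exact Subalgebra.prod_mem _ fun i _ => LinearMap.mem_polynomialAlongLines ((L.flip _).flip _)

theorem exists_eq_const_mul_of_sq_eq_mul_sq [CharZero k] {f g : H → k}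
    (hf : f ∈ polynomialAlongLines k H) (hg : g ∈ polynomialAlongLines k H) {K : k}
    (h : ∀ x, f x ^ 2 = K * g x ^ 2) : ∃ c, ∀ x, f x = c * g x := by
  by_cases h0 : ∀ x, f x = 0
  · exact ⟨0, fun x => by simp [h0 x]⟩
  simp only [not_forall] at h0
  obtain ⟨x₀, hx₀⟩ := h0
  have hg₀ : g x₀ ≠ 0 := by
    intro hg₀
    have := h x₀
    rw [hg₀, zero_pow two_ne_zero, mul_zero] at this
    exact hx₀ (pow_eq_zero_iff two_ne_zero |>.mp this)
  set c := f x₀ / g x₀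
  have hK : K = c ^ 2 := by
    rw [div_pow, eq_div_iff (pow_ne_zero 2 hg₀)]
    exact (h x₀).symm
  refine ⟨c, fun x => ?_⟩
  obtain ⟨P, hP⟩ := hf x₀ (x - x₀)
  obtain ⟨R, hR⟩ := hg x₀ (x - x₀)
  have hPR : (P - C c * R) * (P + C c * R) = 0 := by
    apply Polynomial.funext
    intro t
    simp only [eval_mul, eval_sub, eval_add, eval_C, hP, hR, eval_zero]
    linear_combination h (x₀ + t • (x - x₀)) + (g (x₀ + t • (x - x₀))) ^ 2 * hK
  rcases mul_eq_zero.mp hPR with h1 | h1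
  · have := congrArg (eval 1) h1
    simp only [eval_mul, eval_sub, eval_C, hP, hR, eval_zero, one_smul, add_sub_cancel] at this
    linear_combination this
  · have := congrArg (eval 0) h1
    simp only [eval_mul, eval_add, eval_C, hP, hR, eval_zero, zero_smul, add_zero] at this
    exfalso
    apply hx₀
    have hc : c * g x₀ = f x₀ := div_mul_cancel₀ _ hg₀
    rw [hc, ← two_mul] at this
    exact (mul_eq_zero.mp this).resolve_left two_ne_zero

end PolynomialAlongLines
namespace CliffordAlgebra

variable {k H : Type*} [Field k] [AddCommGroup H] [Module k H] {Q : QuadraticForm k H}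
  {V : Type*} [AddCommGroup V] [Module k V] [Module (CliffordAlgebra Q) V]

theorem apply_ι_smul_left {τ : BilinForm k V}
    (hτ : ∀ (a : CliffordAlgebra Q) (u v : V), τ (a • u) v = τ u (involute (reverse a) • v))
    (x : H) (u v : V) : τ (ι Q x • u) v = -τ u (ι Q x • v) := by
  rw [hτ, reverse_ι, involute_ι, neg_smul, map_neg]

variable [IsScalarTower k (CliffordAlgebra Q) V]

variable (Q V) in
def ιSmul : H →ₗ[k] Module.End k V :=
  (Algebra.lsmul k k V).toLinearMap ∘ₗ ι Q

theorem ιSmul_apply (x : H) (v : V) : ιSmul Q V x v = ι Q x • v :=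
  rfl

theorem ιSmul_mul_self (x : H) : ιSmul Q V x * ιSmul Q V x = Q x • 1 := by
  simp only [ιSmul, LinearMap.comp_apply, AlgHom.toLinearMap_apply, ← map_mul, ι_sq_scalar,
    Algebra.algebraMap_eq_smul_one, map_smul, map_one]

theorem det_ιSmul_sq (x : H) : LinearMap.det (ιSmul Q V x) ^ 2 = Q x ^ finrank k V := by
  rw [sq, ← map_mul, ιSmul_mul_self, LinearMap.det_smul, map_one, mul_one]

variable (Q) in
/-- `x ↦ ω_x`. -/
def twistedForm (τ : BilinForm k V) : H →ₗ[k] BilinForm k V :=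
  LinearMap.llcomp k V V (V →ₗ[k] k) τ ∘ₗ ιSmul Q V

theorem twistedForm_apply (τ : BilinForm k V) (x : H) (u v : V) :
    twistedForm Q τ x u v = τ (ι Q x • u) v :=
  rfl

theorem twistedForm_eq_compLeft (τ : BilinForm k V) (x : H) :
    twistedForm Q τ x = τ.compLeft (ιSmul Q V x) :=
  rfl

theorem twistedForm_isAlt [CharZero k] {τ : BilinForm k V} (hsymm : ∀ u v, τ u v = τ v u)
    (hτ : ∀ (a : CliffordAlgebra Q) (u v : V), τ (a • u) v = τ u (involute (reverse a) • v))
    (x : H) : (twistedForm Q τ x).IsAlt := fun u => by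
  have h := apply_ι_smul_left hτ x u u
  rw [hsymm u] at h
  exact self_eq_neg.mp h

theorem twistedForm_comp_ιSmul {τ : BilinForm k V}
    (hτ : ∀ (a : CliffordAlgebra Q) (u v : V), τ (a • u) v = τ u (involute (reverse a) • v))
    (x : H) :
    (twistedForm Q τ x).comp (ιSmul Q V x) (ιSmul Q V x) = (-Q x) • twistedForm Q τ x := by
  ext u v
  rw [LinearMap.BilinForm.comp_apply, LinearMap.smul_apply, LinearMap.smul_apply,
    twistedForm_apply, twistedForm_apply, ιSmul_apply, ιSmul_apply, ← mul_smul, ι_sq_scalar,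
    algebraMap_smul, LinearMap.BilinForm.smul_left, apply_ι_smul_left hτ x u v, smul_eq_mul]
  ring

theorem sq_wedgePowAlt_twistedForm_apply_basis [CharZero k] {τ : BilinForm k V}
    (hsymm : ∀ u v, τ u v = τ v u)
    (hτ : ∀ (a : CliffordAlgebra Q) (u v : V), τ (a • u) v = τ u (involute (reverse a) • v))
    {n : ℕ} (b : Basis (Fin (2 * (2 * n))) k V) (x : H) :
    (twistedForm Q τ x).wedgePowAlt (2 * n) b ^ 2 =
      LinearMap.BilinForm.stdSymplecticWedge k (2 * n) ^ 2 *
        (LinearMap.BilinForm.toMatrix b τ).det * (Q x ^ n) ^ 2 := by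
  have hdim : finrank k V = 2 * (2 * n) := (finrank_eq_card_basis b).trans (Fintype.card_fin _)
  rw [twistedForm_eq_compLeft, LinearMap.BilinForm.sq_wedgePowAlt_compLeft_apply_basis τ b
    (twistedForm_isAlt hsymm hτ x) (twistedForm_comp_ιSmul hτ x)
    (by rw [det_ιSmul_sq, hdim, (even_two_mul _).neg_pow]), (even_two_mul n).neg_pow, ← pow_mul,
    mul_comm n 2]

end CliffordAlgebra

open LinearMap.BilinForm

theorem wedgePow_omega_eq_const_mul_Q_pow
    {k : Type*} [Field k] [CharZero k]
    {H : Type*} [AddCommGroup H] [Module k H]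
    (Q : QuadraticForm k H)
    {V : Type*} [AddCommGroup V] [Module k V] [FiniteDimensional k V]
    [Module (CliffordAlgebra Q) V] [IsScalarTower k (CliffordAlgebra Q) V]
    (τ : LinearMap.BilinForm k V)
    (hτsymm : ∀ u v : V, τ u v = τ v u)
    (hτinv : ∀ (a : CliffordAlgebra Q) (u v : V),
      τ (a • u) v = τ u (involute (reverse a) • v))
    (n : ℕ) (hdim : Module.finrank k V = 4 * n)
    (vol : AlternatingMap k V k (Fin (4 * n))) (hvol : vol ≠ 0) :
    ∃ c : k, ∀ (x : H) (ξ : Fin (2 * (2 * n)) → V),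
      wedgePow (fun u v => τ (ι Q x • u) v) (2 * n) ξ
        = c * Q x ^ n * vol (fun i => ξ (Fin.cast (by ring) i)) := by
  let b := finBasisOfFinrankEq k V (hdim.trans (by ring) : finrank k V = 2 * (2 * n))
  let vol' := vol.domDomCongr (finCongr (by ring : 4 * n = 2 * (2 * n)))
  have hvol' : vol' ≠ 0 := (AlternatingMap.domDomCongr_eq_zero_iff _ vol).not.mpr hvol
  let f : H → k := (vol' b)⁻¹ • fun x => (twistedForm Q τ x).wedgePowAlt (2 * n) b
  obtain ⟨c, hc⟩ := exists_eq_const_mul_of_sq_eq_mul_sq (f := f) (g := ⇑Q ^ n)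
    (K := stdSymplecticWedge k (2 * n) ^ 2 * (toMatrix b τ).det / vol' b ^ 2)
    (Subalgebra.smul_mem _ (wedgePowAlt_mem_polynomialAlongLines _ _ _) _)
    (Subalgebra.pow_mem _ Q.mem_polynomialAlongLines n) fun x => by
      simp only [f, Pi.smul_apply, smul_eq_mul, Pi.pow_apply, mul_pow,
        sq_wedgePowAlt_twistedForm_apply_basis hτsymm hτinv b x]
      ring
  refine ⟨c, fun x ξ => ?_⟩
  calc wedgePow (fun u v => τ (ι Q x • u) v) (2 * n) ξ
      = (twistedForm Q τ x).wedgePowAlt (2 * n) ξ := by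
        simp only [wedgePowAlt_apply, twistedForm_apply]
    _ = f x * vol' ξ := by
      rw [AlternatingMap.apply_eq_div_mul b _ vol' hvol' ξ, div_eq_inv_mul]
      rfl
    _ = c * Q x ^ n * vol (fun i => ξ (Fin.cast (by ring) i)) := by
      rw [hc x]
      rfl
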